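/- Let G be a graph with n vertices and let k < n. If G has no k-block, then there exists a set S of at most 4(n−k)−1 separations of G, each of order less than k, such that among any k vertices of G some two are separated by a separation in S. -/

import Mathlib

variable {V : Type*}

/-- `S` separates `u` from `v` in `G`: neither lies in `S` and every walk meets `S`. -/
def SepBy (G : SimpleGraph V) (S : Set V) (u v : V) : Prop :=
  u ∉ S ∧ v ∉ S ∧ ∀ p : G.Walk u v, ∃ w ∈ p.support, w ∈ S

/-- `X` is (≤k)-inseparable: no set of at most `k` vertices separates two of its vertices. -/
def Insep (G : SimpleGraph V) (k : ℕ) (X : Set V) : Prop :=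
  ∀ S : Finset V, S.card ≤ k → ∀ u ∈ X, ∀ v ∈ X, ¬ SepBy G (S : Set V) u v

/-- A `k`-block: a maximal (≤(k-1))-inseparable set of at least `k` vertices. -/
def IsBlockN (G : SimpleGraph V) (k : ℕ) (B : Set V) : Prop :=
  k ≤ B.ncard ∧ Insep G (k - 1) B ∧
    ∀ B' : Set V, B ⊆ B' → Insep G (k - 1) B' → B' = B

/-- `(A,B)` is a separation of `G`. -/
def IsSepn (G : SimpleGraph V) (A B : Set V) : Prop :=
  A ∪ B = Set.univ ∧ ∀ a ∈ A \ B, ∀ b ∈ B \ A, ¬ G.Adj a b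

/-- A separation is proper if neither side contains the other. -/
def ProperSep (A B : Set V) : Prop := ¬ A ⊆ B ∧ ¬ B ⊆ A

/-- `G` is `k`-connected. -/
def KConn (G : SimpleGraph V) [Fintype V] (k : ℕ) : Prop :=
  k < Fintype.card V ∧ ∀ S : Finset V, S.card < k → ∀ u v : V, ¬ SepBy G (S : Set V) u v

/-!
No `k`-set is `(k-1)`-inseparable, since a maximal inseparable superset of it would be a
`k`-block. So every `k`-set contains `u, v` separated by fewer than `k` vertices `S`, and the
vertices reachable from `u` avoiding `S` give a separation of order `< k` splitting it.
Split one `k`-subset of `U` by such a separation `(A, B)` and recurse into `U ∩ A` and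
`U ∩ B`: every `k`-subset of `U` is split by `(A, B)` or lies in one of them. As
`|U ∩ A| + |U ∩ B| ≤ |U| + k - 1`, this uses at most `2 (|U| - k) + 1` separations, and
`2 (n - k) + 1 ≤ 4 (n - k) - 1` for `k < n`.
-/

theorem Finset.card_filter_mem_add_card_filter_mem_le [Finite V] [DecidableEq V] {A B : Set V}
    (hAB : A ∪ B = Set.univ) (U : Finset V) [DecidablePred (· ∈ A)] [DecidablePred (· ∈ B)] :
    (U.filter (· ∈ A)).card + (U.filter (· ∈ B)).card ≤ U.card + (A ∩ B).ncard := by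
  have hunion : U.filter (· ∈ A) ∪ U.filter (· ∈ B) = U := by
    rw [← Finset.filter_or, Finset.filter_true_of_mem]
    exact fun x _ => Set.eq_univ_iff_forall.mp hAB x
  have hinter : ((U.filter (· ∈ A) ∩ U.filter (· ∈ B) : Finset V) : Set V) ⊆ A ∩ B := by
    intro x hx
    simp only [Finset.coe_inter, Finset.coe_filter, Set.mem_inter_iff, Set.mem_ofPred_eq] at hx
    exact ⟨hx.1.2, hx.2.2⟩
  have := Set.ncard_le_ncard hinter (Set.toFinite _)
  rw [Set.ncard_coe_finset] at this
  have := Finset.card_union_add_card_inter (U.filter (· ∈ A)) (U.filter (· ∈ B))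
  rw [hunion] at this
  omega

section

variable {G : SimpleGraph V} {k : ℕ}

def IsSmallSepn (G : SimpleGraph V) (k : ℕ) (p : Set V × Set V) : Prop :=
  IsSepn G p.1 p.2 ∧ (p.1 ∩ p.2).ncard < k

def Splits (p : Set V × Set V) (T : Finset V) : Prop :=
  ∃ u ∈ T, ∃ v ∈ T, u ∈ p.1 \ p.2 ∧ v ∈ p.2 \ p.1

theorem ncard_lt_of_insep [Finite V] (hno : ¬ ∃ B, IsBlockN G k B) {X : Set V}
    (hX : Insep G (k - 1) X) : X.ncard < k := by
  by_contra! hkX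
  obtain ⟨B, hXB, hB⟩ := Finite.exists_le_maximal (p := Insep G (k - 1)) hX
  exact hno ⟨B, hkX.trans (Set.ncard_le_ncard hXB), hB.prop,
    fun B' hBB' hB' => (hB.eq_of_le hB' hBB').symm⟩

theorem SepBy.exists_isSepn {S : Set V} {u v : V} (h : SepBy G S u v) :
    ∃ A B : Set V, IsSepn G A B ∧ A ∩ B ⊆ S ∧ u ∈ A \ B ∧ v ∈ B \ A := by
  obtain ⟨huS, hvS, hwalk⟩ := h
  set R : Set V := {x | ∃ p : G.Walk u x, ∀ w ∈ p.support, w ∉ S}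
  have huR : u ∈ R := ⟨.nil, by simpa using huS⟩
  have hvR : v ∉ R := fun ⟨p, hp⟩ => by
    obtain ⟨w, hw, hwS⟩ := hwalk p
    exact hp w hw hwS
  have hR_adj : ∀ a b, a ∈ R → b ∉ S → G.Adj a b → b ∈ R := by
    rintro a b ⟨p, hp⟩ hbS hab
    refine ⟨p.concat hab, fun w hw => ?_⟩
    rw [SimpleGraph.Walk.support_concat, List.mem_append, List.mem_singleton] at hw
    rcases hw with hw | rfl
    exacts [hp w hw, hbS]
  refine ⟨R ∪ S, Rᶜ, ⟨Set.eq_univ_of_forall fun x => by by_cases hx : x ∈ R <;> simp [hx], ?_⟩,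
    ?_, ?_, ?_⟩
  · rintro a ⟨-, haR⟩ b ⟨hbR, hbRS⟩ hab
    rw [Set.mem_compl_iff, not_not] at haR
    exact hbRS (.inl (hR_adj a b haR (fun hbS => hbRS (.inr hbS)) hab))
  · rintro x ⟨hxR | hxS, hxR'⟩
    exacts [absurd hxR hxR', hxS]
  · simpa using huR
  · simp [hvR, hvS]

theorem exists_isSmallSepn_splits [Finite V] (hno : ¬ ∃ B, IsBlockN G k B) {T : Finset V}
    (hT : T.card = k) : ∃ p, IsSmallSepn G k p ∧ Splits p T := by
  have hT_sep : ¬ Insep G (k - 1) T := fun h => (ncard_lt_of_insep hno h).ne (by simpa using hT)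
  simp only [Insep, not_forall, not_not] at hT_sep
  obtain ⟨S, hS, u, hu, v, hv, huv⟩ := hT_sep
  obtain ⟨A, B, hAB, hABS, huAB, hvBA⟩ := SepBy.exists_isSepn huv
  have hk : 0 < k := hT ▸ Finset.card_pos.mpr ⟨u, hu⟩
  have horder : (A ∩ B).ncard ≤ S.card := by
    simpa only [Set.ncard_coe_finset] using Set.ncard_le_ncard hABS S.finite_toSet
  exact ⟨(A, B), ⟨hAB, show (A ∩ B).ncard < k by omega⟩, u, hu, v, hv, huAB, hvBA⟩

theorem exists_finset_isSmallSepn_splits [Finite V]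
    (hsplit : ∀ T : Finset V, T.card = k → ∃ p, IsSmallSepn G k p ∧ Splits p T)
    (U : Finset V) :
    ∃ S : Finset (Set V × Set V), S.card ≤ 2 * (U.card + 1 - k) - 1 ∧
      (∀ p ∈ S, IsSmallSepn G k p) ∧ ∀ T ⊆ U, T.card = k → ∃ p ∈ S, Splits p T := by
  classical
  induction U using Finset.strongInduction with
  | H U ih =>
  by_cases hkU : k ≤ U.card
  swap
  · exact ⟨∅, by simp, by simp, fun T hTU hT => absurd (hT ▸ Finset.card_le_card hTU) hkU⟩
  obtain ⟨T₀, hT₀U, hT₀⟩ := Finset.exists_subset_card_eq hkU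
  obtain ⟨⟨A, B⟩, ⟨hAB, horder⟩, u, hu, v, hv, huAB, hvBA⟩ := hsplit T₀ hT₀
  dsimp only at hAB horder huAB hvBA
  have hUA : U.filter (· ∈ A) ⊂ U := Finset.filter_ssubset.mpr ⟨v, hT₀U hv, hvBA.2⟩
  have hUB : U.filter (· ∈ B) ⊂ U := Finset.filter_ssubset.mpr ⟨u, hT₀U hu, huAB.2⟩
  obtain ⟨SA, hSA, hSA_small, hSA_splits⟩ := ih _ hUA
  obtain ⟨SB, hSB, hSB_small, hSB_splits⟩ := ih _ hUB
  refine ⟨insert (A, B) (SA ∪ SB), ?_, ?_, ?_⟩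
  · have hcount := Finset.card_filter_mem_add_card_filter_mem_le hAB.1 U
    have := Finset.card_lt_card hUA
    have := Finset.card_lt_card hUB
    calc _ ≤ (SA ∪ SB).card + 1 := Finset.card_insert_le _ _
      _ ≤ SA.card + SB.card + 1 := by grw [Finset.card_union_le]
      _ ≤ _ := by omega
  · simp only [Finset.mem_insert, Finset.mem_union]
    rintro p (rfl | hp | hp)
    exacts [⟨hAB, horder⟩, hSA_small p hp, hSB_small p hp]
  · intro T hTU hT
    by_cases hTA : ∀ x ∈ T, x ∈ A
    · obtain ⟨p, hp, hpT⟩ :=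
        hSA_splits T (fun x hx => Finset.mem_filter.mpr ⟨hTU hx, hTA x hx⟩) hT
      exact ⟨p, by simp [hp], hpT⟩
    by_cases hTB : ∀ x ∈ T, x ∈ B
    · obtain ⟨p, hp, hpT⟩ :=
        hSB_splits T (fun x hx => Finset.mem_filter.mpr ⟨hTU hx, hTB x hx⟩) hT
      exact ⟨p, by simp [hp], hpT⟩
    push Not at hTA hTB
    obtain ⟨x, hxT, hxA⟩ := hTA
    obtain ⟨y, hyT, hyB⟩ := hTB
    have hxB : x ∈ B := (Set.eq_univ_iff_forall.mp hAB.1 x).resolve_left hxA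
    have hyA : y ∈ A := (Set.eq_univ_iff_forall.mp hAB.1 y).resolve_right hyB
    exact ⟨(A, B), Finset.mem_insert_self _ _, y, hyT, x, hxT, ⟨hyA, hyB⟩, ⟨hxB, hxA⟩⟩

end

theorem stmt14 [Fintype V] (G : SimpleGraph V) (k : ℕ) (hk : k < Fintype.card V)
    (hno : ¬ ∃ B : Set V, IsBlockN G k B) :
    ∃ S : Finset (Set V × Set V), S.card ≤ 4 * (Fintype.card V - k) - 1 ∧
      (∀ p ∈ S, IsSepn G p.1 p.2 ∧ (p.1 ∩ p.2).ncard < k) ∧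
      ∀ T : Finset V, T.card = k →
        ∃ u ∈ T, ∃ v ∈ T, ∃ p ∈ S,
          (u ∈ p.1 \ p.2 ∧ v ∈ p.2 \ p.1) ∨ (u ∈ p.2 \ p.1 ∧ v ∈ p.1 \ p.2) := by
  obtain ⟨S, hS, hS_small, hS_splits⟩ :=
    exists_finset_isSmallSepn_splits (fun _ hT => exists_isSmallSepn_splits hno hT) Finset.univ
  refine ⟨S, ?_, hS_small, fun T hT => ?_⟩
  · rw [Finset.card_univ] at hS
    omega
  · obtain ⟨p, hp, u, hu, v, hv, hup, hvp⟩ := hS_splits T (Finset.subset_univ T) hT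
    exact ⟨u, hu, v, hv, p, hp, .inl ⟨hup, hvp⟩⟩
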